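/- Let β : ℝ³ \ (ℝe₃) → ℝ^{3×3} be a C¹ matrix field such that β(x₁,x₂,x₃) = β(x₁,x₂,0) for all (x₁,x₂) ≠ (0,0) and all x₃ ∈ ℝ, β(λx₁,λx₂,x₃) = λ^{−1} β(x₁,x₂,x₃) for all λ > 0, and β is rowwise curl-free on ℝ³ \ ℝe₃, i.e. ∂_j β_{ak} = ∂_k β_{aj} for all indices a, j, k. Then β(x)e₃ = 0 for every x ∈ ℝ³ \ ℝe₃, and there is a constant vector g ∈ ℝ³ such that β(x)·(x₁,x₂,0)ᵀ = g for every x ∈ ℝ³ \ ℝe₃. -/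

import Mathlib

open MeasureTheory Real Filter Metric Set Matrix
noncomputable section

attribute [local instance] Matrix.frobeniusNormedAddCommGroup Matrix.frobeniusNormedSpace

abbrev E3 := EuclideanSpace ℝ (Fin 3)
abbrev Mat3 := Matrix (Fin 3) (Fin 3) ℝ

/-- the point (a,b,c) of ℝ³ -/
def mk3 (a b c : ℝ) : E3 := WithLp.toLp 2 (fun i => ![a, b, c] i)

/-- ℝ³ minus the x₃-axis -/
def OffAxis : Set E3 := {x | x 0 ≠ 0 ∨ x 1 ≠ 0}


/-! Each row `ω` of `β` is a closed 1-form on `ℝ³ \ ℝe₃` that is invariant under translation along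
`e₃` and homogeneous of degree `-1` along the radial field `V = (x₁, x₂, 0)`, so Euler's relation
`∂_V ω = -ω` holds. Closedness and `e₃`-invariance kill every derivative of `ω(e₃)`, and Euler's
relation then forces `ω(e₃) = 0`. By Cartan's formula `d(ω(V)) = L_V ω - ι_V dω`, and both terms
vanish, so `ω(V)` is constant on the connected set `ℝ³ \ ℝe₃`. -/

theorem isOpen_offAxis : IsOpen OffAxis :=
  (isOpen_compl_singleton.preimage (EuclideanSpace.proj (0 : Fin 3)).continuous).union
    (isOpen_compl_singleton.preimage (EuclideanSpace.proj (1 : Fin 3)).continuous)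

/-- The axis is the kernel of `x ↦ (x₀, x₁)`, a subspace of codimension 2. -/
theorem isPreconnected_offAxis : IsPreconnected OffAxis := by
  let pr : E3 →ₗ[ℝ] ℝ × ℝ :=
    (EuclideanSpace.proj (0 : Fin 3)).toLinearMap.prod (EuclideanSpace.proj (1 : Fin 3)).toLinearMap
  have hpr : Function.Surjective pr := fun p => ⟨mk3 p.1 p.2 0, by simp [pr, mk3]⟩
  have hcodim : 1 < Module.rank ℝ (E3 ⧸ LinearMap.ker pr) := by
    rw [(pr.quotKerEquivOfSurjective hpr).rank_eq, rank_prod', Module.rank_self]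
    norm_num
  have hset : OffAxis = (LinearMap.ker pr : Set E3)ᶜ := by
    ext x
    simp [OffAxis, pr, or_iff_not_and_not]
  rw [hset]
  exact (isConnected_compl_of_one_lt_codim hcodim).isPreconnected

open Topology

section LineDeriv

variable {E F : Type*} [NormedAddCommGroup E] [NormedSpace ℝ E] [NormedAddCommGroup F]
  [NormedSpace ℝ F] {f : E → F} {x v : E}

theorem fderiv_apply_eq_zero_of_add_smul_eq (hf : DifferentiableAt ℝ f x)
    (h : ∀ t : ℝ, f (x + t • v) = f x) : fderiv ℝ f x v = 0 := by
  have hline : HasDerivAt (fun t : ℝ => f (x + t • v)) (fderiv ℝ f x v) 0 :=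
    hf.hasFDerivAt.hasLineDerivAt v
  simp only [h] at hline
  exact hline.unique (hasDerivAt_const 0 (f x))

theorem fderiv_apply_eq_neg_of_add_smul_eq_inv_smul (hf : DifferentiableAt ℝ f x)
    (h : (fun t : ℝ => f (x + t • v)) =ᶠ[𝓝 0] fun t => (1 + t)⁻¹ • f x) :
    fderiv ℝ f x v = -f x := by
  have hline : HasDerivAt (fun t : ℝ => f (x + t • v)) (fderiv ℝ f x v) 0 :=
    hf.hasFDerivAt.hasLineDerivAt v
  have hinv : HasDerivAt (fun t : ℝ => (1 + t)⁻¹ • f x) (-f x) 0 := by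
    simpa using (((hasDerivAt_id (0 : ℝ)).const_add 1).inv (by norm_num)).smul_const (f x)
  exact (hline.congr_of_eventuallyEq h.symm).unique hinv

end LineDeriv

theorem EuclideanSpace.clm_ext {ι F : Type*} [Fintype ι] [DecidableEq ι] [NormedAddCommGroup F]
    [NormedSpace ℝ F] {L L' : EuclideanSpace ℝ ι →L[ℝ] F}
    (h : ∀ j, L (EuclideanSpace.single j 1) = L' (EuclideanSpace.single j 1)) : L = L' :=
  ContinuousLinearMap.coe_injective <|
    (EuclideanSpace.basisFun ι ℝ).toBasis.ext fun j => by simpa using h j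

theorem mk3_self (x : E3) : mk3 (x 0) (x 1) (x 2) = x := by
  ext i; fin_cases i <;> simp [mk3]

theorem add_smul_single_two (x : E3) (t : ℝ) :
    x + t • EuclideanSpace.single 2 1 = mk3 (x 0) (x 1) (x 2 + t) := by
  ext i; fin_cases i <;> simp [mk3]

theorem add_smul_mk3_radial (x : E3) (t : ℝ) :
    x + t • mk3 (x 0) (x 1) 0 = mk3 ((1 + t) * x 0) ((1 + t) * x 1) (x 2) := by
  ext i; fin_cases i <;> simp [mk3] <;> ring

theorem mk3_radial (x : E3) :
    mk3 (x 0) (x 1) 0 = x 0 • EuclideanSpace.single 0 1 + x 1 • EuclideanSpace.single 1 1 := by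
  ext i; fin_cases i <;> simp [mk3]

section ScalarField

variable {f : E3 → ℝ} {x : E3}

theorem fderiv_single_two_eq_zero (hf : DifferentiableAt ℝ f x) (hx : x ∈ OffAxis)
    (hinv : ∀ x₁ x₂ x₃ : ℝ, (x₁ ≠ 0 ∨ x₂ ≠ 0) → f (mk3 x₁ x₂ x₃) = f (mk3 x₁ x₂ 0)) :
    fderiv ℝ f x (EuclideanSpace.single 2 1) = 0 :=
  fderiv_apply_eq_zero_of_add_smul_eq hf fun t => by
    rw [add_smul_single_two, hinv _ _ _ hx, ← hinv _ _ (x 2) hx, mk3_self]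

theorem fderiv_radial_eq_neg (hf : DifferentiableAt ℝ f x) (hx : x ∈ OffAxis)
    (hhom : ∀ x₁ x₂ x₃ lam : ℝ, (x₁ ≠ 0 ∨ x₂ ≠ 0) → 0 < lam →
      f (mk3 (lam * x₁) (lam * x₂) x₃) = lam⁻¹ * f (mk3 x₁ x₂ x₃)) :
    fderiv ℝ f x (mk3 (x 0) (x 1) 0) = -f x := by
  refine fderiv_apply_eq_neg_of_add_smul_eq_inv_smul hf ?_
  filter_upwards [eventually_gt_nhds (neg_one_lt_zero : (-1 : ℝ) < 0)] with t ht
  rw [add_smul_mk3_radial, hhom _ _ _ _ hx (by linarith), mk3_self, smul_eq_mul]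

end ScalarField

section ClosedRow

variable {f : Fin 3 → E3 → ℝ}

theorem vertical_eq_zero
    (hcurl : ∀ x ∈ OffAxis, ∀ j k : Fin 3,
      fderiv ℝ (f k) x (EuclideanSpace.single j 1) = fderiv ℝ (f j) x (EuclideanSpace.single k 1))
    (hvert : ∀ k, ∀ x ∈ OffAxis, fderiv ℝ (f k) x (EuclideanSpace.single 2 1) = 0)
    (heuler : ∀ k, ∀ x ∈ OffAxis, fderiv ℝ (f k) x (mk3 (x 0) (x 1) 0) = -f k x)
    {x : E3} (hx : x ∈ OffAxis) : f 2 x = 0 := by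
  have hzero : fderiv ℝ (f 2) x = 0 :=
    EuclideanSpace.clm_ext fun j => by rw [hcurl x hx j 2, hvert j x hx]; rfl
  simpa [hzero] using heuler 2 x hx

/-- By closedness, `∂ⱼ (f₀ x₀ + f₁ x₁) = x₀ ∂₀ fⱼ + x₁ ∂₁ fⱼ + fⱼ` for `j = 0, 1`, which vanishes by
Euler's relation; for `j = 2` both terms vanish by invariance along the axis. -/
theorem exists_radial_contraction_eq_const (hf : ∀ k, DifferentiableOn ℝ (f k) OffAxis)
    (hcurl : ∀ x ∈ OffAxis, ∀ j k : Fin 3,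
      fderiv ℝ (f k) x (EuclideanSpace.single j 1) = fderiv ℝ (f j) x (EuclideanSpace.single k 1))
    (hvert : ∀ k, ∀ x ∈ OffAxis, fderiv ℝ (f k) x (EuclideanSpace.single 2 1) = 0)
    (heuler : ∀ k, ∀ x ∈ OffAxis, fderiv ℝ (f k) x (mk3 (x 0) (x 1) 0) = -f k x) :
    ∃ c, ∀ x ∈ OffAxis, f 0 x * x 0 + f 1 x * x 1 = c := by
  have hderiv : ∀ x ∈ OffAxis, HasFDerivAt (fun y : E3 => f 0 y * y 0 + f 1 y * y 1)
      ((f 0 x • EuclideanSpace.proj 0 + x 0 • fderiv ℝ (f 0) x) +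
        (f 1 x • EuclideanSpace.proj 1 + x 1 • fderiv ℝ (f 1) x)) x := fun x hx =>
    have hfx k := ((hf k).differentiableAt (isOpen_offAxis.mem_nhds hx)).hasFDerivAt
    ((hfx 0).mul (EuclideanSpace.proj 0).hasFDerivAt).add
      ((hfx 1).mul (EuclideanSpace.proj 1).hasFDerivAt)
  refine isOpen_offAxis.exists_is_const_of_fderiv_eq_zero isPreconnected_offAxis
    (fun x hx => (hderiv x hx).differentiableAt.differentiableWithinAt) fun x hx => ?_
  have heuler' k : x 0 * fderiv ℝ (f k) x (EuclideanSpace.single 0 1) +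
      x 1 * fderiv ℝ (f k) x (EuclideanSpace.single 1 1) = -f k x := by
    simpa [mk3_radial] using heuler k x hx
  rw [(hderiv x hx).fderiv]
  refine EuclideanSpace.clm_ext fun j => ?_
  fin_cases j <;>
    simp +decide only [Fin.zero_eta, Fin.mk_one, Fin.reduceFinMk, _root_.add_apply,
      _root_.smul_apply, PiLp.proj_apply, PiLp.single_apply, smul_eq_mul, ite_true, ite_false,
      mul_one, mul_zero, Pi.zero_apply, _root_.zero_apply]
  · linear_combination heuler' 0 + x 1 * hcurl x hx 0 1
  · linear_combination heuler' 1 + x 0 * hcurl x hx 1 0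
  · simp [hvert 0 x hx, hvert 1 x hx]

end ClosedRow

/-- Let β be a C¹ matrix field on ℝ³ \ ℝe₃, independent of x₃, (−1)-homogeneous in (x₁,x₂),
and rowwise curl-free.  Then β(x)e₃ = 0 off the axis, and there is a constant vector g with
β(x)·(x₁,x₂,0)ᵀ = g off the axis. -/
theorem statement5 (β : E3 → Mat3)
    (hsmooth : ContDiffOn ℝ 1 β OffAxis)
    (hinv : ∀ x₁ x₂ x₃ : ℝ, (x₁ ≠ 0 ∨ x₂ ≠ 0) → β (mk3 x₁ x₂ x₃) = β (mk3 x₁ x₂ 0))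
    (hhom : ∀ x₁ x₂ x₃ lam : ℝ, (x₁ ≠ 0 ∨ x₂ ≠ 0) → 0 < lam →
      β (mk3 (lam * x₁) (lam * x₂) x₃) = lam⁻¹ • β (mk3 x₁ x₂ x₃))
    (hcurl : ∀ x ∈ OffAxis, ∀ a j k : Fin 3,
      fderiv ℝ (fun y => β y a k) x (EuclideanSpace.single j 1) =
        fderiv ℝ (fun y => β y a j) x (EuclideanSpace.single k 1)) :
    (∀ x ∈ OffAxis, (β x).mulVec ![(0:ℝ), 0, 1] = 0) ∧
    ∃ g : Fin 3 → ℝ, ∀ x ∈ OffAxis, (β x).mulVec ![x 0, x 1, 0] = g := by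
  have hdiff (a k : Fin 3) : DifferentiableOn ℝ (fun y => β y a k) OffAxis :=
    (Matrix.entryLinearMap ℝ ℝ a k).toContinuousLinearMap.differentiable.comp_differentiableOn
      (hsmooth.differentiableOn one_ne_zero)
  have hdiffAt (a k : Fin 3) {x : E3} (hx : x ∈ OffAxis) :
      DifferentiableAt ℝ (fun y => β y a k) x :=
    (hdiff a k).differentiableAt (isOpen_offAxis.mem_nhds hx)
  have hvert (a k : Fin 3) (x : E3) (hx : x ∈ OffAxis) :
      fderiv ℝ (fun y => β y a k) x (EuclideanSpace.single 2 1) = 0 :=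
    fderiv_single_two_eq_zero (hdiffAt a k hx) hx fun x₁ x₂ x₃ h => by rw [hinv x₁ x₂ x₃ h]
  have heuler (a k : Fin 3) (x : E3) (hx : x ∈ OffAxis) :
      fderiv ℝ (fun y => β y a k) x (mk3 (x 0) (x 1) 0) = -β x a k :=
    fderiv_radial_eq_neg (hdiffAt a k hx) hx fun x₁ x₂ x₃ lam h hlam => by
      rw [hhom x₁ x₂ x₃ lam h hlam, Matrix.smul_apply, smul_eq_mul]
  refine ⟨fun x hx => ?_, ?_⟩
  · ext a
    simp [Matrix.mulVec, dotProduct, Fin.sum_univ_three,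
      vertical_eq_zero (hcurl · · a) (hvert a) (heuler a) hx]
  · choose g hg using fun a =>
      exists_radial_contraction_eq_const (hdiff a) (hcurl · · a) (hvert a) (heuler a)
    refine ⟨g, fun x hx => funext fun a => ?_⟩
    simpa [Matrix.mulVec, dotProduct, Fin.sum_univ_three] using hg a x hx
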